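/- Derivability in the restricted proof system Reg is strictly weaker than in Reg⁺ in the following concrete sense: the infinite λ-term M₂ defined by the guarded recursion M₂ = λa. rec(a) with rec(a) = λb. (rec(b)) a (i.e., the infinite term λa.λb.(λc.((λd.(…) c)) b) a with ever-growing spine of distinct bound variables applied in reverse) is derivable in Reg (witnessed by a finite closed derivation using the del-rule that may remove any vacuous prefix variable), but is not derivable in Reg⁺ (where the del-rule may only remove the last prefix variable): the unique bottom-up Reg⁺-derivation attempt for ()M₂ produces an infinite tree with pairwise distinct sequents, so no FIX discharge is possible. Hence M₂ is regular but not strongly regular. -/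

import Mathlib

/-- Node labels of (nameless, de Bruijn) infinite λ-terms. -/
inductive Lab : Type
  | lam : Lab
  | app : Lab
  | var : ℕ → Lab
deriving DecidableEq

/-- Which child positions a node with a given label may have. -/
def okChild : Lab → Bool → Prop
  | .lam, false => True
  | .app, _ => True
  | _, _ => False

/-- Infinite λ-terms (in nameless de Bruijn style), represented as
labelled possibly-infinite binary trees given by their labelling function. -/
structure Tm : Type where
  lab : List Bool → Option Lab
  root : (lab []).isSome
  cons : ∀ p b, (lab (p ++ [b])).isSome ↔ ∃ l, lab p = some l ∧ okChild l b

namespace Tm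

/-- Subterm at a position. -/
def sub (t : Tm) (p : List Bool) (h : (t.lab p).isSome) : Tm where
  lab q := t.lab (p ++ q)
  root := by simpa using h
  cons q b := by
    have h' := t.cons (p ++ q) b
    simpa [List.append_assoc] using h'

/-- Auxiliary: number of λ-labels strictly above, accumulating the prefix. -/
def ldepthAux (t : Tm) : List Bool → List Bool → ℕ
  | _, [] => 0
  | pre, b :: p => (if t.lab pre = some .lam then 1 else 0) + t.ldepthAux (pre ++ [b]) p

/-- The number of λ-nodes strictly above position `p` in `t`. -/
def ldepth (t : Tm) (p : List Bool) : ℕ := t.ldepthAux [] p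

end Tm

def shiftLab (σ : ℕ → ℕ) : Lab → Lab
  | .var k => .var (σ k)
  | l => l

theorem okChild_shiftLab (σ : ℕ → ℕ) (l : Lab) (b : Bool) :
    okChild (shiftLab σ l) b ↔ okChild l b := by
  cases l <;> cases b <;> simp [shiftLab, okChild]

/-- Relabel all variable nodes, depending on their λ-depth. -/
def Tm.mapVar (t : Tm) (σ : ℕ → ℕ → ℕ) : Tm where
  lab p := (t.lab p).map (shiftLab (σ (t.ldepth p)))
  root := by
    have h := t.root
    cases hl : t.lab [] with
    | none => rw [hl] at h; simp at h
    | some l => simp [hl]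
  cons p b := by
    constructor
    · intro hs
      have hs' : (t.lab (p ++ [b])).isSome := by simpa using hs
      obtain ⟨l', hl', hok⟩ := (t.cons p b).1 hs'
      exact ⟨shiftLab (σ (t.ldepth p)) l', by simp [hl'],
        (okChild_shiftLab _ _ _).2 hok⟩
    · rintro ⟨l', hl', hok⟩
      obtain ⟨l, hl, hfl⟩ := Option.map_eq_some_iff.mp (by simpa using hl')
      have hok' : okChild l b := by
        have := hfl ▸ hok
        exact (okChild_shiftLab (σ (t.ldepth p)) l b).1 this
      have hs : (t.lab (p ++ [b])).isSome := (t.cons p b).2 ⟨l, hl, hok'⟩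
      simpa using hs

/-- The term consisting of a single variable node with index 0. -/
def var0Tm : Tm where
  lab p := if p = [] then some (.var 0) else none
  root := by simp
  cons p b := by
    constructor
    · intro h
      simp only [List.append_eq_nil_iff] at h
      simp at h
    · rintro ⟨l, hl, hok⟩
      by_cases hp : p = []
      · subst hp
        simp only [if_pos rfl, Option.some.injEq] at hl
        cases hl
        cases b <;> simp [okChild] at hok
      · simp [hp] at hl

/-- The last-but-`j` abstraction-prefix variable occurs in `t`
(at λ-depth `d` inside the term it has de Bruijn index `j + d`). -/
def OccursJ (j : ℕ) (t : Tm) : Prop := ∃ p, t.lab p = some (.var (j + t.ldepth p))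

/-- Remove the prefix variable with base index `j` from the de Bruijn indexing. -/
def downJ (j : ℕ) (t : Tm) : Tm := t.mapVar (fun d k => if j + d < k then k - 1 else k)

/-- The last abstraction-prefix variable occurs. -/
def occurs0 : Tm → Prop := OccursJ 0

/-- Remove the (vacuous) last abstraction-prefix variable. -/
def down0 : Tm → Tm := downJ 0

/-- `t` has no free variables pointing outside the term itself. -/
def ClosedTm (t : Tm) : Prop := ∀ p k, t.lab p = some (.var k) → k < t.ldepth p

/-- Sequents: a prefix length together with an infinite λ-term. -/
abbrev TSeq : Type := ℕ × Tm

/-- λ-decomposition step of the ARS `Reg⁺`. -/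
def SLam (s s' : TSeq) : Prop :=
  s.2.lab [] = some .lam ∧ s'.1 = s.1 + 1 ∧
    ∃ h : (s.2.lab [false]).isSome, s'.2 = s.2.sub [false] h

/-- Left application-decomposition step. -/
def SApp0 (s s' : TSeq) : Prop :=
  s.2.lab [] = some .app ∧ s'.1 = s.1 ∧
    ∃ h : (s.2.lab [false]).isSome, s'.2 = s.2.sub [false] h

/-- Right application-decomposition step. -/
def SApp1 (s s' : TSeq) : Prop :=
  s.2.lab [] = some .app ∧ s'.1 = s.1 ∧
    ∃ h : (s.2.lab [true]).isSome, s'.2 = s.2.sub [true] h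

/-- Vacuous-prefix removal step (removal of the last prefix variable). -/
def SDel (s s' : TSeq) : Prop :=
  s.1 = s'.1 + 1 ∧ ¬ occurs0 s.2 ∧ s'.2 = down0 s.2

/-- The scope⁺-decomposition ARS `Reg⁺` on prefixed infinite λ-terms. -/
def Step (s s' : TSeq) : Prop := SLam s s' ∨ SApp0 s s' ∨ SApp1 s s' ∨ SDel s s'

/-- A (scope⁺-delimiting) strategy for the ARS `Reg⁺`: a sub-ARS with the
same objects and the same normal forms. -/
def Strategy (S : TSeq → TSeq → Prop) : Prop :=
  (∀ a b, S a b → Step a b) ∧ (∀ a, (∃ b, Step a b) → ∃ b, S a b)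

/-- An infinite λ-term is strongly regular if some scope⁺-delimiting strategy
reaches only finitely many sequents from it. -/
def StronglyRegular (M : Tm) : Prop :=
  ∃ S : TSeq → TSeq → Prop, Strategy S ∧ {s | Relation.ReflTransGen S (0, M) s}.Finite

/-- Natural-deduction derivations of the proof systems `Reg` (`plus = false`)
and `Reg⁺` (`plus = true`) on prefixed infinite λ-terms, with a context of
open marked assumptions.  Side-conditions on FIX are recorded separately. -/
inductive Deriv (plus : Bool) : List TSeq → TSeq → Type
  | assum (Γ : List TSeq) (i : Fin Γ.length) : Deriv plus Γ (Γ.get i)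
  | ax (Γ : List TSeq) (n : ℕ) (h1 : 1 ≤ n) (h2 : plus = false → n = 1) :
      Deriv plus Γ (n, var0Tm)
  | lam (Γ : List TSeq) (n : ℕ) (t : Tm) (h : t.lab [] = some .lam)
      (hs : (t.lab [false]).isSome) (D : Deriv plus Γ (n + 1, t.sub [false] hs)) :
      Deriv plus Γ (n, t)
  | app (Γ : List TSeq) (n : ℕ) (t : Tm) (h : t.lab [] = some .app)
      (h0 : (t.lab [false]).isSome) (h1 : (t.lab [true]).isSome)
      (D0 : Deriv plus Γ (n, t.sub [false] h0)) (D1 : Deriv plus Γ (n, t.sub [true] h1)) :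
      Deriv plus Γ (n, t)
  | del (Γ : List TSeq) (n : ℕ) (t : Tm) (j : ℕ) (hj : j ≤ n) (hp : plus = true → j = 0)
      (hocc : ¬ OccursJ j t) (D : Deriv plus Γ (n, downJ j t)) : Deriv plus Γ (n + 1, t)
  | fix (Γ : List TSeq) (s : TSeq) (D : Deriv plus (s :: Γ) s) : Deriv plus Γ s

namespace Deriv

/-- Depth (number of rule instances on a longest thread). -/
def depth : ∀ {plus Γ s}, Deriv plus Γ s → ℕ
  | _, _, _, .assum _ _ => 0
  | _, _, _, .ax _ _ _ _ => 0
  | _, _, _, .lam _ _ _ _ _ D => D.depth + 1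
  | _, _, _, .app _ _ _ _ _ _ D0 D1 => max D0.depth D1.depth + 1
  | _, _, _, .del _ _ _ _ _ _ _ D => D.depth + 1
  | _, _, _, .fix _ _ D => D.depth + 1

/-- The side-condition of `Reg`/`Reg⁺`: every FIX instance has an immediate
subderivation of depth at least 1. -/
def SC : ∀ {plus Γ s}, Deriv plus Γ s → Prop
  | _, _, _, .assum _ _ => True
  | _, _, _, .ax _ _ _ _ => True
  | _, _, _, .lam _ _ _ _ _ D => D.SC
  | _, _, _, .app _ _ _ _ _ _ D0 D1 => D0.SC ∧ D1.SC
  | _, _, _, .del _ _ _ _ _ _ _ D => D.SC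
  | _, _, _, .fix _ _ D => D.SC ∧ 1 ≤ D.depth

/-- `D.uses j` : some marked-assumption leaf of `D` refers to context entry `j`. -/
def uses : ∀ {plus Γ s}, Deriv plus Γ s → ℕ → Prop
  | _, _, _, .assum _ i, j => (i : ℕ) = j
  | _, _, _, .ax _ _ _ _, _ => False
  | _, _, _, .lam _ _ _ _ _ D, j => D.uses j
  | _, _, _, .app _ _ _ _ _ _ D0 D1, j => D0.uses j ∨ D1.uses j
  | _, _, _, .del _ _ _ _ _ _ _ D, j => D.uses j
  | _, _, _, .fix _ _ D, j => D.uses (j + 1)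

/-- `D.Holds m j` : every node of `D` whose subtree uses context entry `j`
(i.e. every node on a thread from such a marked assumption downwards)
has abstraction-prefix length at least `m`. -/
def Holds : ∀ {plus Γ s}, Deriv plus Γ s → ℕ → ℕ → Prop
  | _, _, _, .assum Γ i, m, j => ((i : ℕ) = j → m ≤ (Γ.get i).1)
  | _, _, _, .ax _ _ _ _, _, _ => True
  | _, _, _, .lam _ n _ _ _ D, m, j => (D.uses j → m ≤ n) ∧ D.Holds m j
  | _, _, _, .app _ n _ _ _ _ D0 D1, m, j =>
      ((D0.uses j ∨ D1.uses j) → m ≤ n) ∧ D0.Holds m j ∧ D1.Holds m j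
  | _, _, _, .del _ n _ _ _ _ _ D, m, j => (D.uses j → m ≤ n + 1) ∧ D.Holds m j
  | _, _, _, .fix _ s D, m, j => (D.uses (j + 1) → m ≤ s.1) ∧ D.Holds m (j + 1)

/-- The side-condition of `Reg₀⁺`: additionally, at every FIX instance all
sequents on threads from its open marked assumptions downwards have
abstraction prefix at least as long as the one of the assumption. -/
def SC0 : ∀ {plus Γ s}, Deriv plus Γ s → Prop
  | _, _, _, .assum _ _ => True
  | _, _, _, .ax _ _ _ _ => True
  | _, _, _, .lam _ _ _ _ _ D => D.SC0
  | _, _, _, .app _ _ _ _ _ _ D0 D1 => D0.SC0 ∧ D1.SC0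
  | _, _, _, .del _ _ _ _ _ _ _ D => D.SC0
  | _, _, _, .fix _ s D => D.SC0 ∧ 1 ≤ D.depth ∧ D.Holds s.1 0

/-- The set of sequents occurring in a derivation. -/
def seqs : ∀ {plus Γ s}, Deriv plus Γ s → Set TSeq
  | _, _, _, .assum Γ i => {Γ.get i}
  | _, _, _, .ax _ n _ _ => {(n, var0Tm)}
  | _, _, _, .lam _ n t _ _ D => insert (n, t) D.seqs
  | _, _, _, .app _ n t _ _ _ D0 D1 => insert (n, t) (D0.seqs ∪ D1.seqs)
  | _, _, _, .del _ n t _ _ _ _ D => insert (n + 1, t) D.seqs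
  | _, _, _, .fix _ s D => insert s D.seqs

end Deriv

/-- Labelling of the infinite term `W` defined by the guarded recursion
`W = λb. (W b') a`, i.e. `W = lam (app W (var 1))` (nameless):
this is `R(a)` for `R(x) = λy. (R(y)) x` at `x = var 0`. -/
def labW : List Bool → Option Lab
  | [] => some .lam
  | [false] => some .app
  | false :: false :: p => labW p
  | false :: true :: p => if p = [] then some (.var 1) else none
  | true :: _ => none

theorem labW_cons : ∀ (p : List Bool) (b : Bool),
    (labW (p ++ [b])).isSome ↔ ∃ l, labW p = some l ∧ okChild l b := by
  intro p
  induction p using labW.induct with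
  | case1 =>
    intro b
    cases b <;> simp [labW, okChild]
  | case2 =>
    intro b
    cases b <;> simp [labW, okChild]
  | case3 p ih =>
    intro b
    simpa [labW] using ih b
  | case4 =>
    intro b
    cases b <;> simp [labW, okChild]
  | case5 p h =>
    intro b
    cases b <;> simp [labW, okChild, h]
  | case6 =>
    intro b
    simp [labW]

/-- The infinite λ-term `W = lam (app W (var 1))`. -/
def Wtm : Tm where
  lab := labW
  root := by simp [labW]
  cons := labW_cons

/-- The infinite λ-term `M₂ = λa. R(a)` with `R(x) = λy. (R(y)) x`,
i.e. `M₂ = lam W`. -/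
def M2 : Tm where
  lab p := match p with
    | [] => some .lam
    | false :: q => labW q
    | true :: _ => none
  root := by simp
  cons p b := by
    rcases p with _ | ⟨c, q⟩
    · cases b <;> simp [labW, okChild]
    · cases c
      · simpa using labW_cons q b
      · simp


/-!
The left spine of `M₂ = λa. R(a)`, `R(x) = λy. R(y) x`, runs through `(a)R(a)`, `(ab)R(b) a`,
`(ab)R(b)`, … In `Reg` the vacuous `a` can be deleted from `(ab)R(b)`, which gives `(b)R(b)`, the
sequent `(a)R(a)` up to renaming, so FIX closes the cycle; the right premise `(ab)a` becomes the
axiom `(a)a` after deleting `b`. In `Reg⁺` only the last prefix variable may be deleted, and it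
always occurs, so the spine is forced on with ever longer prefixes. The rank
`2·(prefix length) + [root is λ]` strictly increases along it, so no FIX can discharge a sequent
on it and no axiom is ever reached; the same spine gives infinitely many reachable sequents.
-/

@[ext]
theorem Tm.ext {t t' : Tm} (h : t.lab = t'.lab) : t = t' := by
  cases t; cases t'; cases h; rfl

theorem Tm.one_le_ldepth_cons (t : Tm) (h : t.lab [] = some .lam) (b : Bool) (p : List Bool) :
    1 ≤ t.ldepth (b :: p) := by
  simp [Tm.ldepth, Tm.ldepthAux, h]

theorem downJ_eq_self {j : ℕ} {t : Tm}
    (h : ∀ p k, t.lab p = some (.var k) → k ≤ j + t.ldepth p) : downJ j t = t := by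
  apply Tm.ext; funext p
  show (t.lab p).map _ = t.lab p
  cases hl : t.lab p with
  | none => rfl
  | some l =>
    cases l with
    | var k => simp [shiftLab, Nat.not_lt.2 (h p k hl)]
    | _ => rfl

def varTm (k : ℕ) : Tm where
  lab p := if p = [] then some (.var k) else none
  root := by simp
  cons p b := by by_cases hp : p = [] <;> simp [hp, okChild]

theorem varTm_zero : varTm 0 = var0Tm := rfl

theorem not_occursJ_varTm {j k : ℕ} (h : k ≠ j) : ¬ OccursJ j (varTm k) := by
  rintro ⟨p, hp⟩
  by_cases h0 : p = []
  · subst h0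
    exact h (by simpa [varTm, Tm.ldepth, Tm.ldepthAux] using hp)
  · simp [varTm, h0] at hp

theorem downJ_varTm_of_lt {j k : ℕ} (h : j < k) : downJ j (varTm k) = varTm (k - 1) := by
  apply Tm.ext; funext p
  by_cases h0 : p = []
  · subst h0
    simp [downJ, Tm.mapVar, varTm, Tm.ldepth, Tm.ldepthAux, shiftLab, h]
  · simp [downJ, Tm.mapVar, varTm, h0]

def Derivable (plus : Bool) (Γ : List TSeq) (s : TSeq) : Prop := ∃ D : Deriv plus Γ s, D.SC

namespace Derivable

variable {plus : Bool} {Γ : List TSeq} {n : ℕ} {t : Tm}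

theorem assum {s : TSeq} (h : s ∈ Γ) : Derivable plus Γ s := by
  obtain ⟨i, rfl⟩ := List.get_of_mem h
  exact ⟨.assum Γ i, by simp only [Deriv.SC]⟩

theorem ax (hn : 1 ≤ n) (h : plus = false → n = 1) : Derivable plus Γ (n, var0Tm) :=
  ⟨.ax Γ n hn h, by simp only [Deriv.SC]⟩

theorem lam (h : t.lab [] = some .lam) (hs : (t.lab [false]).isSome)
    (hD : Derivable plus Γ (n + 1, t.sub [false] hs)) : Derivable plus Γ (n, t) :=
  let ⟨D, hD⟩ := hD
  ⟨.lam Γ n t h hs D, by simpa only [Deriv.SC]⟩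

theorem app (h : t.lab [] = some .app) (h0 : (t.lab [false]).isSome) (h1 : (t.lab [true]).isSome)
    (hD0 : Derivable plus Γ (n, t.sub [false] h0)) (hD1 : Derivable plus Γ (n, t.sub [true] h1)) :
    Derivable plus Γ (n, t) :=
  let ⟨D0, hD0⟩ := hD0
  let ⟨D1, hD1⟩ := hD1
  ⟨.app Γ n t h h0 h1 D0 D1, by simpa only [Deriv.SC] using ⟨hD0, hD1⟩⟩

theorem del {j : ℕ} (hj : j ≤ n) (hp : plus = true → j = 0) (hocc : ¬ OccursJ j t)
    (hD : Derivable plus Γ (n, downJ j t)) : Derivable plus Γ (n + 1, t) :=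
  let ⟨D, hD⟩ := hD
  ⟨.del Γ n t j hj hp hocc D, by simpa only [Deriv.SC]⟩

theorem fix_lam (h : t.lab [] = some .lam) (hs : (t.lab [false]).isSome)
    (hD : Derivable plus ((n, t) :: Γ) (n + 1, t.sub [false] hs)) : Derivable plus Γ (n, t) :=
  let ⟨D, hD⟩ := hD
  ⟨.fix Γ (n, t) (.lam _ n t h hs D),
    by simpa only [Deriv.SC, Deriv.depth, le_add_iff_nonneg_left, zero_le, and_true]⟩

end Derivable

/-- `R(b) a`, the body of `Wtm = R(a)`. -/
def WAtm : Tm := Wtm.sub [false] rfl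

theorem labW_eq_var {p : List Bool} {k : ℕ} (h : labW p = some (.var k)) : k = 1 := by
  induction p using labW.induct with
  | case3 p ih => exact ih h
  | case4 => simp_all [labW]
  | case5 p hp => simp [labW, hp] at h
  | _ => simp [labW] at h

theorem wtm_lab_eq_var {p : List Bool} {k : ℕ} (h : Wtm.lab p = some (.var k)) :
    k = 1 ∧ 1 ≤ Wtm.ldepth p := by
  refine ⟨labW_eq_var h, ?_⟩
  cases p with
  | nil => simp [Wtm, labW] at h
  | cons b p => exact Wtm.one_le_ldepth_cons rfl b p

theorem not_occursJ_one_wtm : ¬ OccursJ 1 Wtm := by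
  rintro ⟨p, hp⟩
  have := wtm_lab_eq_var hp
  omega

theorem downJ_one_wtm : downJ 1 Wtm = Wtm :=
  downJ_eq_self fun _ _ hp => by have := wtm_lab_eq_var hp; omega

theorem occurs0_wtm : occurs0 Wtm := ⟨[false, true], by decide⟩

theorem occurs0_watm : occurs0 WAtm := ⟨[false, false, true], by decide⟩

theorem watm_sub_true : WAtm.sub [true] rfl = varTm 1 := by
  apply Tm.ext; funext q
  cases q <;> rfl

theorem derivable_m2_reg : Derivable false [] (0, M2) := by
  refine Derivable.lam (t := M2) rfl rfl (Derivable.fix_lam (t := Wtm) rfl rfl ?_)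
  show Derivable false [(1, Wtm)] (2, WAtm)
  refine Derivable.app rfl rfl rfl ?_ ?_
  · show Derivable false [(1, Wtm)] (1 + 1, Wtm)
    refine Derivable.del le_rfl (by simp) not_occursJ_one_wtm ?_
    rw [downJ_one_wtm]
    exact Derivable.assum (List.mem_singleton_self _)
  · rw [watm_sub_true]
    refine Derivable.del (Nat.zero_le 1) (fun _ => rfl) (not_occursJ_varTm one_ne_zero) ?_
    rw [downJ_varTm_of_lt zero_lt_one, Nat.sub_self, varTm_zero]
    exact Derivable.ax le_rfl fun _ => rfl

/-- Each `Reg⁺`-rule other than FIX and the axiom has a premise that is a `LeftStep` from its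
conclusion: a bottom-up derivation attempt cannot close while its leftmost branch stays open. -/
def LeftStep (s s' : TSeq) : Prop := SLam s s' ∨ SApp0 s s' ∨ SDel s s'

section LeftStepRank

variable {P : Set TSeq} {r : TSeq → ℕ}

/-- FIX preserves the invariant `hΓ` and every other rule raises the rank, so no open assumption
can ever close a branch. -/
theorem Deriv.false_of_leftStep_rank_lt
    (hstep : ∀ s ∈ P, ∀ s', LeftStep s s' → s' ∈ P ∧ r s < r s')
    (hax : ∀ n, (n, var0Tm) ∉ P) {Γ : List TSeq} {s : TSeq} (D : Deriv true Γ s) (hD : D.SC)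
    (hs : s ∈ P) (hΓ : ∀ g ∈ Γ, r g < r s ∨ r g ≤ r s ∧ 1 ≤ D.depth) : False := by
  induction D with
  | assum Γ i =>
    rcases hΓ _ (List.get_mem Γ i) with h | ⟨-, h⟩
    · exact lt_irrefl _ h
    · simp [Deriv.depth] at h
  | ax Γ n => exact hax n hs
  | lam Γ n t h hs' D ih =>
    simp only [Deriv.SC] at hD
    obtain ⟨hP, hr⟩ := hstep _ hs (n + 1, t.sub [false] hs') (Or.inl ⟨h, rfl, hs', rfl⟩)
    exact ih hD hP fun g hg => Or.inl (by rcases hΓ g hg with h | h <;> omega)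
  | app Γ n t h h0 h1 D0 D1 ih0 =>
    simp only [Deriv.SC] at hD
    obtain ⟨hP, hr⟩ := hstep _ hs (n, t.sub [false] h0) (Or.inr (Or.inl ⟨h, rfl, h0, rfl⟩))
    exact ih0 hD.1 hP fun g hg => Or.inl (by rcases hΓ g hg with h | h <;> omega)
  | del Γ n t j hj hp hocc D ih =>
    simp only [Deriv.SC] at hD
    obtain rfl := hp rfl
    obtain ⟨hP, hr⟩ := hstep _ hs (n, downJ 0 t) (Or.inr (Or.inr ⟨rfl, hocc, rfl⟩))
    exact ih hD hP fun g hg => Or.inl (by rcases hΓ g hg with h | h <;> omega)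
  | fix Γ s D ih =>
    simp only [Deriv.SC] at hD
    refine ih hD.1 hs fun g hg => Or.inr ⟨?_, hD.2⟩
    rcases List.mem_cons.1 hg with rfl | hg
    · exact le_rfl
    · rcases hΓ g hg with h | h <;> omega

theorem not_derivable_of_leftStep_rank_lt
    (hstep : ∀ s ∈ P, ∀ s', LeftStep s s' → s' ∈ P ∧ r s < r s')
    (hax : ∀ n, (n, var0Tm) ∉ P) {s : TSeq} (hs : s ∈ P) : ¬ Derivable true [] s :=
  fun ⟨D, hD⟩ => D.false_of_leftStep_rank_lt hstep hax hD hs (by simp)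

end LeftStepRank

/-- The sequents on the leftmost branch of the bottom-up `Reg⁺`-derivation attempt for `() M₂`,
up to their prefix lengths. -/
def m2Seqs : Set TSeq := {s | s = (0, M2) ∨ s.2 = Wtm ∨ s.2 = WAtm}

def spineRank (s : TSeq) : ℕ := 2 * s.1 + if s.2.lab [] = some .app then 0 else 1

theorem leftStep_m2Seqs_spineRank_lt : ∀ s ∈ m2Seqs, ∀ s', LeftStep s s' →
    s' ∈ m2Seqs ∧ spineRank s < spineRank s' := by
  rintro ⟨n, t⟩ hs ⟨n', t'⟩ hstep
  rcases hs with hs | rfl | rfl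
  · obtain ⟨rfl, rfl⟩ := Prod.mk.inj hs
    rcases hstep with ⟨-, rfl, -, rfl⟩ | ⟨h, -⟩ | ⟨h, -⟩
    · exact ⟨Or.inr (Or.inl rfl), show 2 * 0 + 1 < 2 * (0 + 1) + 1 by omega⟩
    · cases h
    · cases h
  · rcases hstep with ⟨-, rfl, -, rfl⟩ | ⟨h, -⟩ | ⟨-, hocc, -⟩
    · refine ⟨Or.inr (Or.inr rfl), ?_⟩
      show 2 * n + 1 < 2 * (n + 1) + 0
      omega
    · cases h
    · exact absurd occurs0_wtm hocc
  · rcases hstep with ⟨h, -⟩ | ⟨-, hn, _, ht⟩ | ⟨-, hocc, -⟩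
    · cases h
    · dsimp only at hn ht
      subst hn ht
      refine ⟨Or.inr (Or.inl rfl), ?_⟩
      show 2 * n' + 0 < 2 * n' + 1
      omega
    · exact absurd occurs0_watm hocc

theorem var0Tm_notMem_m2Seqs (n : ℕ) : (n, var0Tm) ∉ m2Seqs := by
  rintro (h | h | h)
  · cases congrArg (fun s : TSeq => s.2.lab []) h
  · cases congrArg (fun t : Tm => t.lab []) h
  · cases congrArg (fun t : Tm => t.lab []) h

theorem not_derivable_m2_regPlus : ¬ Derivable true [] (0, M2) :=
  not_derivable_of_leftStep_rank_lt leftStep_m2Seqs_spineRank_lt var0Tm_notMem_m2Seqs (Or.inl rfl)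

theorem reflTransGen_step_m2_wtm (n : ℕ) : Relation.ReflTransGen Step (0, M2) (n + 1, Wtm) := by
  induction n with
  | zero => exact .single (Or.inl ⟨rfl, rfl, rfl, rfl⟩)
  | succ n ih =>
    have hlam : Step (n + 1, Wtm) (n + 2, WAtm) := Or.inl ⟨rfl, rfl, rfl, rfl⟩
    have happ : Step (n + 2, WAtm) (n + 2, Wtm) := Or.inr (Or.inl ⟨rfl, rfl, rfl, rfl⟩)
    exact (ih.tail hlam).tail happ

/-- The infinite λ-term `M₂ = λa. R(a)` with
`R(x) = λy. (R(y)) x` is derivable in the proof system `Reg`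
(where del may remove any vacuous prefix variable, and the axiom is `(y) y`),
but not derivable in `Reg⁺` (where del may only remove the last prefix
variable); moreover in the scope⁺-decomposition ARS the set of sequents
reachable from `() M₂` is infinite.  Hence `M₂` is regular but not strongly
regular, and derivability in `Reg` is strictly weaker than in `Reg⁺`. -/
theorem stmt19 :
    (∃ D : Deriv false [] ((0 : ℕ), M2), D.SC) ∧
    (¬ ∃ D : Deriv true [] ((0 : ℕ), M2), D.SC) ∧
    {s | Relation.ReflTransGen Step ((0 : ℕ), M2) s}.Infinite := by
  refine ⟨derivable_m2_reg, not_derivable_m2_regPlus, ?_⟩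
  refine Set.infinite_of_injective_forall_mem (f := fun n : ℕ => ((n + 1, Wtm) : TSeq)) ?_
    reflTransGen_step_m2_wtm
  intro m n h
  simpa using congrArg Prod.fst h
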